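/- Let a₁, a₂ > 0, n ≥ 1 and τ ∈ ℝ. Let X̂₁, X̂₂ be real random variables that are (a₁, n)-concentrated around m₁₁ and m₁₂ respectively with m₁₁ < m₁₂, and let Ŷ₁, Ŷ₂ be real random variables that are (a₂, n)-concentrated around m₂₁ and m₂₂ respectively with m₂₁ < τ and m₂₂ ≤ τ. Then P( {Ŷ₁ > τ} ∪ ( {Ŷ₂ ≤ τ} ∩ {X̂₁ > X̂₂} ) ) ≤ 6·exp( −(n/4)·min{ a₂(τ − m₂₁)², a₁(m₁₂ − m₁₁)² } ). -/

import Mathlib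

/-! A union bound. Arm 1 looks infeasible only if `Ŷ₁` overshoots `m₂₁` by at least half of the
margin `τ - m₂₁`, and `X̂₂ < X̂₁` forces `X̂₁ ≥ c` or `X̂₂ ≤ c` at the midpoint `c` of `m₁₁` and `m₁₂`,
i.e. a deviation of half the gap for one of the two objective estimates. Each of these three
deviation events has probability at most `2·exp(−(n/4)·min …)`. -/

open MeasureTheory Real

/-- A real random variable `X` on `(Ω, P)` is `(a, n)`-concentrated around `m` if
`P(|X − m| ≥ Δ) ≤ 2·exp(−a·n·Δ²)` for every `Δ > 0`. -/
def ConcentratedAround {Ω : Type*} [MeasurableSpace Ω] (P : Measure Ω)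
    (a : ℝ) (n : ℕ) (X : Ω → ℝ) (m : ℝ) : Prop :=
  ∀ Δ : ℝ, 0 < Δ →
    P {ω | Δ ≤ |X ω - m|} ≤ ENNReal.ofReal (2 * Real.exp (-(a * n * Δ ^ 2)))

namespace ConcentratedAround

variable {Ω : Type*} [MeasurableSpace Ω] {P : Measure Ω} {a : ℝ} {n : ℕ} {X : Ω → ℝ} {m : ℝ}
  {Δ M : ℝ}

theorem measure_le_abs_sub_le (h : ConcentratedAround P a n X m) (hΔ : 0 < Δ)
    (hM : M ≤ a * n * Δ ^ 2) :
    P {ω | Δ ≤ |X ω - m|} ≤ ENNReal.ofReal (2 * exp (-M)) := by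
  refine (h Δ hΔ).trans (ENNReal.ofReal_le_ofReal ?_)
  gcongr

theorem measure_add_le (h : ConcentratedAround P a n X m) (hΔ : 0 < Δ)
    (hM : M ≤ a * n * Δ ^ 2) :
    P {ω | m + Δ ≤ X ω} ≤ ENNReal.ofReal (2 * exp (-M)) := by
  refine (measure_mono fun ω (hω : m + Δ ≤ X ω) => ?_).trans (h.measure_le_abs_sub_le hΔ hM)
  show Δ ≤ |X ω - m|
  exact le_abs.2 (Or.inl (by linarith))

theorem measure_le_sub (h : ConcentratedAround P a n X m) (hΔ : 0 < Δ)
    (hM : M ≤ a * n * Δ ^ 2) :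
    P {ω | X ω ≤ m - Δ} ≤ ENNReal.ofReal (2 * exp (-M)) := by
  refine (measure_mono fun ω (hω : X ω ≤ m - Δ) => ?_).trans (h.measure_le_abs_sub_le hΔ hM)
  show Δ ≤ |X ω - m|
  exact le_abs.2 (Or.inr (by linarith))

end ConcentratedAround

theorem measure_lt_le_of_concentratedAround {Ω : Type*} [MeasurableSpace Ω] {P : Measure Ω}
    {a : ℝ} {n : ℕ} {X₁ X₂ : Ω → ℝ} {m₁ m₂ M : ℝ} (hm : m₁ < m₂)
    (hX₁ : ConcentratedAround P a n X₁ m₁) (hX₂ : ConcentratedAround P a n X₂ m₂)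
    (hM : M ≤ a * n * ((m₂ - m₁) / 2) ^ 2) :
    P {ω | X₂ ω < X₁ ω} ≤ ENNReal.ofReal (4 * exp (-M)) := by
  set Δ := (m₂ - m₁) / 2
  have hΔ : 0 < Δ := half_pos (sub_pos.2 hm)
  have hmid : m₁ + Δ = m₂ - Δ := by simp only [Δ]; ring
  have hsplit : {ω | X₂ ω < X₁ ω} ⊆ {ω | m₁ + Δ ≤ X₁ ω} ∪ {ω | X₂ ω ≤ m₂ - Δ} := by
    intro ω (hω : X₂ ω < X₁ ω)
    rcases le_or_gt (m₁ + Δ) (X₁ ω) with h₁ | h₁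
    · exact Or.inl h₁
    · exact Or.inr (show X₂ ω ≤ m₂ - Δ by linarith)
  calc P {ω | X₂ ω < X₁ ω}
      ≤ P {ω | m₁ + Δ ≤ X₁ ω} + P {ω | X₂ ω ≤ m₂ - Δ} :=
        (measure_mono hsplit).trans (measure_union_le _ _)
    _ ≤ ENNReal.ofReal (2 * exp (-M)) + ENNReal.ofReal (2 * exp (-M)) :=
        add_le_add (hX₁.measure_add_le hΔ hM) (hX₂.measure_le_sub hΔ hM)
    _ = ENNReal.ofReal (4 * exp (-M)) := by
        rw [← ENNReal.ofReal_add (by positivity) (by positivity)]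
        ring_nf

theorem two_arm_error_feasible_suboptimal {Ω : Type*} [MeasurableSpace Ω] (P : Measure Ω)
    (a₁ a₂ : ℝ) (n : ℕ)
    (τ m₁₁ m₁₂ m₂₁ : ℝ) (hm₁ : m₁₁ < m₁₂) (hm₂₁ : m₂₁ < τ)
    (X₁ X₂ Y₁ Y₂ : Ω → ℝ)
    (hX₁ : ConcentratedAround P a₁ n X₁ m₁₁) (hX₂ : ConcentratedAround P a₁ n X₂ m₁₂)
    (hY₁ : ConcentratedAround P a₂ n Y₁ m₂₁) :
    P ({ω | τ < Y₁ ω} ∪ ({ω | Y₂ ω ≤ τ} ∩ {ω | X₂ ω < X₁ ω}))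
      ≤ ENNReal.ofReal (6 * Real.exp (-((n : ℝ) / 4 *
          min (a₂ * (τ - m₂₁) ^ 2) (a₁ * (m₁₂ - m₁₁) ^ 2)))) := by
  set M := (n : ℝ) / 4 * min (a₂ * (τ - m₂₁) ^ 2) (a₁ * (m₁₂ - m₁₁) ^ 2)
  have hMY : M ≤ a₂ * n * ((τ - m₂₁) / 2) ^ 2 :=
    calc M ≤ n / 4 * (a₂ * (τ - m₂₁) ^ 2) :=
        mul_le_mul_of_nonneg_left (min_le_left _ _) (by positivity)
      _ = _ := by ring
  have hMX : M ≤ a₁ * n * ((m₁₂ - m₁₁) / 2) ^ 2 :=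
    calc M ≤ n / 4 * (a₁ * (m₁₂ - m₁₁) ^ 2) :=
        mul_le_mul_of_nonneg_left (min_le_right _ _) (by positivity)
      _ = _ := by ring
  have hY : P {ω | τ < Y₁ ω} ≤ ENNReal.ofReal (2 * exp (-M)) :=
    (measure_mono fun ω (hω : τ < Y₁ ω) => show m₂₁ + (τ - m₂₁) / 2 ≤ Y₁ ω by linarith).trans
      (hY₁.measure_add_le (by linarith) hMY)
  calc _ ≤ P {ω | τ < Y₁ ω} + P {ω | X₂ ω < X₁ ω} :=
        (measure_mono (Set.union_subset_union_right _ Set.inter_subset_right)).trans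
          (measure_union_le _ _)
    _ ≤ ENNReal.ofReal (2 * exp (-M)) + ENNReal.ofReal (4 * exp (-M)) :=
        add_le_add hY (measure_lt_le_of_concentratedAround hm₁ hX₁ hX₂ hMX)
    _ = ENNReal.ofReal (6 * exp (-M)) := by
        rw [← ENNReal.ofReal_add (by positivity) (by positivity)]
        ring_nf
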